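/- Size decrement lemma: Let 𝐏′ be a finite collection of quartiles, j ∈ {1,2,3}, n ∈ ℤ, E > 0, and complex numbers (a^{(j)}_{P_j})_{P∈𝐏′} with energy_j ≤ E, and suppose size_j((a^{(j)}_{P_j})_{P∈𝐏′}) ≤ 2^{−n} E. Then 𝐏′ can be partitioned as 𝐏′ = 𝐏″ ∪ 𝐏‴ where size_j((a^{(j)}_{P_j})_{P∈𝐏″}) ≤ 2^{−n−1} E and 𝐏‴ is a disjoint union of a collection 𝐓 of trees satisfying Σ_{T∈𝐓} |I_T| ≲ 2^{2n}. -/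

import Mathlib

open MeasureTheory Set

/-- The Walsh functions `w_l : ℝ → ℝ`, defined recursively by
`w_0 = χ_{[0,1)}`, `w_{2l}(x) = w_l(2x) + w_l(2x−1)`,
`w_{2l+1}(x) = w_l(2x) − w_l(2x−1)`. -/
noncomputable def walsh : ℕ → ℝ → ℝ
  | 0, x => if x ∈ Set.Ico (0:ℝ) 1 then 1 else 0
  | (n+1), x =>
      if (n+1) % 2 = 0 then walsh ((n+1)/2) (2*x) + walsh ((n+1)/2) (2*x - 1)
      else walsh ((n+1)/2) (2*x) - walsh ((n+1)/2) (2*x - 1)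
  decreasing_by all_goals exact Nat.div_lt_self (Nat.succ_pos n) one_lt_two

/-- A tile `[2^{-k}n, 2^{-k}(n+1)) × [2^k l, 2^k(l+1))`:
a half-open dyadic rectangle of area one. -/
structure Tile where
  k : ℤ
  n : ℤ
  l : ℤ
deriving DecidableEq

namespace Tile

/-- The time interval `I_P = [2^{-k}n, 2^{-k}(n+1))` of a tile. -/
noncomputable def I (p : Tile) : Set ℝ := Set.Ico ((2:ℝ)^(-p.k) * p.n) ((2:ℝ)^(-p.k) * (p.n+1))

/-- The frequency interval `ω_P = [2^k l, 2^k(l+1))` of a tile. -/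
noncomputable def freq (p : Tile) : Set ℝ := Set.Ico ((2:ℝ)^(p.k) * p.l) ((2:ℝ)^(p.k) * (p.l+1))

/-- The tile as a subset `I_P × ω_P` of the time-frequency plane. -/
noncomputable def area (p : Tile) : Set (ℝ × ℝ) := p.I ×ˢ p.freq

/-- The length `|I_P| = 2^{-k}` of the time interval of a tile. -/
noncomputable def len (p : Tile) : ℝ := (2:ℝ)^(-p.k)

/-- The center `ξ_P` of the frequency interval of a tile. -/
noncomputable def ξ (p : Tile) : ℝ := (2:ℝ)^(p.k) * ((p.l : ℝ) + 1/2)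

/-- The tile order: `p < q` iff `I_p ⊊ I_q` and `ω_q ⊆ ω_p`. -/
def lt (p q : Tile) : Prop := p.I ⊂ q.I ∧ q.freq ⊆ p.freq

/-- `p ≤ q` iff `p < q` or `p = q`. -/
def le (p q : Tile) : Prop := Tile.lt p q ∨ p = q

/-- The Walsh wave packet `φ_P(x) = 2^{k/2} w_l(2^k x − n)` of a tile. -/
noncomputable def wp (p : Tile) : ℝ → ℝ :=
  fun x => Real.sqrt ((2:ℝ)^(p.k)) * walsh p.l.toNat ((2:ℝ)^(p.k) * x - p.n)

end Tile

/-- A quartile `[2^{-k}n, 2^{-k}(n+1)) × [2^{k+2}l, 2^{k+2}(l+1))`: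
a dyadic rectangle of area four. -/
structure Quartile where
  k : ℤ
  n : ℤ
  l : ℤ
deriving DecidableEq

namespace Quartile

/-- The time interval `I_P` of a quartile. -/
noncomputable def I (P : Quartile) : Set ℝ := Set.Ico ((2:ℝ)^(-P.k) * P.n) ((2:ℝ)^(-P.k) * (P.n+1))

/-- The length `|I_P| = 2^{-k}` of the time interval of a quartile. -/
noncomputable def len (P : Quartile) : ℝ := (2:ℝ)^(-P.k)

/-- The `j`-th sub-tile `P_j = I_P × [2^k(4l+j−1), 2^k(4l+j))` of a quartile,
for `j = 1, 2, 3`. -/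
def tile (P : Quartile) (j : ℕ) : Tile := ⟨P.k, P.n, 4*P.l + ((j - 1 : ℕ) : ℤ)⟩

end Quartile

/-- `T` is an `i`-tree with top `top`: `P_i ≤ top_i` for all `P ∈ T`. -/
def IsTree (i : ℕ) (top : Quartile) (T : Finset Quartile) : Prop :=
  ∀ P ∈ T, Tile.le (P.tile i) (top.tile i)

/-- `size_j((a_P)_{P∈Ps})`: the sup over trees `T ⊆ Ps` which are `i`-trees for
some `i ≠ j` of `(|I_T|⁻¹ Σ_{P∈T} |a_{P_j}|²)^{1/2}`. -/
noncomputable def size (Ps : Finset Quartile) (j : ℕ) (a : Quartile → ℂ) : ℝ :=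
  sSup ((fun p : Quartile × Finset Quartile =>
      Real.sqrt ((∑ P ∈ p.2, ‖a P‖^2) / p.1.len)) ''
    {p | p.2 ⊆ Ps ∧ ∃ i ∈ ({1,2,3} : Set ℕ), i ≠ j ∧ IsTree i p.1 p.2})

/-- `energy_j((a_P)_{P∈Ps})`: the sup over subsets `D ⊆ Ps` with
`{P_j : P ∈ D}` pairwise disjoint of `(Σ_{P∈D} |a_{P_j}|²)^{1/2}`. -/
noncomputable def energy (Ps : Finset Quartile) (j : ℕ) (a : Quartile → ℂ) : ℝ :=
  sSup ((fun D : Finset Quartile => Real.sqrt (∑ P ∈ D, ‖a P‖^2)) ''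
    {D | D ⊆ Ps ∧ ∀ P ∈ D, ∀ P' ∈ D, P ≠ P' →
      Disjoint (P.tile j).area (P'.tile j).area})

/-- The `L^{1,∞}(I)` quasinorm `sup_{λ>0} λ |{x ∈ I : |g(x)| > λ}|`. -/
noncomputable def weakL1 (g : ℝ → ℝ) (I : Set ℝ) : ℝ :=
  sSup {r | ∃ lam : ℝ, 0 < lam ∧ r = lam * (volume {x ∈ I | lam < |g x|}).toReal}

/-- The square function `(Σ_{P∈T} |a_{P_j}|² χ_{I_P}/|I_P|)^{1/2}` of a tree. -/
noncomputable def treeFn (T : Finset Quartile) (a : Quartile → ℂ) : ℝ → ℝ :=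
  fun x => Real.sqrt (∑ P ∈ T, ‖a P‖^2 * (P.I.indicator (fun _ => (1:ℝ)) x) / P.len)

namespace SizeDecAux

lemma two_zpos (s : ℤ) : (0:ℝ) < 2^s := zpow_pos (by norm_num) s

/-- dyadic interval `[2^s m, 2^s (m+1))` -/
def DD (s m : ℤ) : Set ℝ := Set.Ico ((2:ℝ)^s * m) ((2:ℝ)^s * (m+1))

lemma cast_le_iff (s : ℤ) {A B : ℤ} : (2:ℝ)^s * A ≤ (2:ℝ)^s * B ↔ A ≤ B := by
  rw [mul_le_mul_iff_right₀ (two_zpos s)]; exact_mod_cast Iff.rfl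

lemma cast_lt_iff (s : ℤ) {A B : ℤ} : (2:ℝ)^s * A < (2:ℝ)^s * B ↔ A < B := by
  rw [mul_lt_mul_iff_right₀ (two_zpos s)]; exact_mod_cast Iff.rfl

lemma DD_lt (s m : ℤ) : (2:ℝ)^s * m < (2:ℝ)^s * (m+1) := by
  have h := (cast_lt_iff s (A := m) (B := m+1)).2 (by omega)
  convert h using 2 <;> push_cast <;> ring

lemma mem_DD {s m : ℤ} {x : ℝ} : x ∈ DD s m ↔ (2:ℝ)^s * m ≤ x ∧ x < (2:ℝ)^s * (m+1) :=
  Iff.rfl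

lemma left_mem_DD (s m : ℤ) : (2:ℝ)^s * m ∈ DD s m := ⟨le_refl _, DD_lt s m⟩

lemma DD_nonempty (s m : ℤ) : (DD s m).Nonempty := ⟨_, left_mem_DD s m⟩

lemma zpow_split (s : ℤ) (e : ℕ) : (2:ℝ)^(s + (e:ℤ)) = (2:ℝ)^s * ((2:ℕ)^e : ℕ) := by
  rw [zpow_add₀ (two_ne_zero), zpow_natCast]; push_cast; ring

/-- rewrite `2^(s+e) * B` as `2^s * (2^e * B)` (ℤ-cast forms) -/
lemma scale_shift (s : ℤ) (e : ℕ) (B : ℤ) :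
    (2:ℝ)^(s + (e:ℤ)) * B = (2:ℝ)^s * ((2^e * B : ℤ) : ℝ) := by
  rw [zpow_add₀ (two_ne_zero : (2:ℝ) ≠ 0), zpow_natCast]; push_cast; ring

lemma DD_extract {s : ℤ} {e : ℕ} {m b : ℤ} {x : ℝ}
    (hx : x ∈ DD s m) (hx' : x ∈ DD (s + (e:ℤ)) b) :
    2^e * b ≤ m ∧ m + 1 ≤ 2^e * (b + 1) := by
  obtain ⟨h1, h2⟩ := hx
  obtain ⟨h3, h4⟩ := hx'
  rw [show ((b:ℝ)) = (((b:ℤ)):ℝ) from rfl] at h3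
  have h3' : (2:ℝ)^s * ((2^e * b : ℤ) : ℝ) ≤ x := by rw [← scale_shift]; exact h3
  have h4' : x < (2:ℝ)^s * ((2^e * (b+1) : ℤ) : ℝ) := by
    rw [← scale_shift]; push_cast; exact h4
  constructor
  · have : (2:ℝ)^s * ((2^e * b : ℤ) : ℝ) < (2:ℝ)^s * ((m+1 : ℤ) : ℝ) := by
      refine lt_of_le_of_lt h3' (lt_of_lt_of_le h2 ?_)
      apply le_of_eq; push_cast; ring
    have := (cast_lt_iff s).1 this
    omega
  · have : (2:ℝ)^s * ((m:ℤ) : ℝ) < (2:ℝ)^s * ((2^e * (b+1) : ℤ) : ℝ) :=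
      lt_of_le_of_lt h1 h4'
    have := (cast_lt_iff s).1 this
    omega

lemma DD_build {s : ℤ} {e : ℕ} {m b : ℤ}
    (h1 : 2^e * b ≤ m) (h2 : m + 1 ≤ 2^e * (b + 1)) :
    DD s m ⊆ DD (s + (e:ℤ)) b := by
  intro x hx
  obtain ⟨hx1, hx2⟩ := hx
  constructor
  · rw [scale_shift]
    refine le_trans ?_ hx1
    have := (cast_le_iff s).2 h1
    refine le_trans this (le_of_eq ?_); norm_num
  · have he : (2:ℝ)^(s + (e:ℤ)) * (b+1) = (2:ℝ)^s * ((2^e * (b+1) : ℤ) : ℝ) := by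
      rw [← scale_shift]; congr 1; push_cast; ring
    rw [he]
    refine lt_of_lt_of_le hx2 ?_
    have := (cast_le_iff s).2 h2
    refine le_trans (le_of_eq ?_) this; push_cast; ring

/-- two dyadic intervals with a common point are nested (smaller scale inside bigger) -/
lemma DD_nested {s s' : ℤ} {m b : ℤ} {x : ℝ} (hs : s ≤ s')
    (hx : x ∈ DD s m) (hx' : x ∈ DD s' b) : DD s m ⊆ DD s' b := by
  have he : s' = s + ((s' - s).toNat : ℤ) := by omega
  rw [he] at hx' ⊢
  obtain ⟨h1, h2⟩ := DD_extract hx hx'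
  exact DD_build h1 h2

lemma DD_same_scale {s m m' : ℤ} {x : ℝ} (hx : x ∈ DD s m) (hx' : x ∈ DD s m') : m = m' := by
  have h := DD_extract (e := 0) hx (by simpa using hx')
  have h' := DD_extract (e := 0) hx' (by simpa using hx)
  simp at h h'
  omega

lemma DD_scale_le {s s' m m' : ℤ} (h : DD s m ⊆ DD s' m') : s ≤ s' := by
  have h2 := (Set.Ico_subset_Ico_iff (DD_lt s m)).1 h
  have : (2:ℝ)^s ≤ (2:ℝ)^s' := by
    have e1 : (2:ℝ)^s = (2:ℝ)^s * (m+1) - (2:ℝ)^s * m := by ring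
    have e2 : (2:ℝ)^s' = (2:ℝ)^s' * (m'+1) - (2:ℝ)^s' * m' := by ring
    rw [e1, e2]; linarith [h2.1, h2.2]
  exact (zpow_le_zpow_iff_right₀ (by norm_num : (1:ℝ) < 2)).1 this

lemma DD_ssubset {s s' m m' : ℤ} (h : DD s m ⊆ DD s' m') (hs : s < s') :
    DD s m ⊂ DD s' m' := by
  refine ⟨h, fun hcon => ?_⟩
  have hsub' : DD s' m' ⊆ DD s m := hcon
  have := DD_scale_le hsub'
  omega

/-- strict order between same-scale dyadic intervals -/
lemma DD_order {s m1 m2 : ℤ} {x y : ℝ} (h : m1 < m2) (hx : x ∈ DD s m1) (hy : y ∈ DD s m2) :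
    x < y := by
  refine lt_of_lt_of_le hx.2 (le_trans ?_ hy.1)
  have := (cast_le_iff s (A := m1 + 1) (B := m2)).2 (by omega)
  refine le_trans (le_of_eq ?_) (le_trans this (le_of_eq ?_)) <;> push_cast <;> ring

end SizeDecAux
namespace SizeDecAux

lemma tile_freq (P : Quartile) (i : ℕ) :
    (P.tile i).freq = DD P.k (4*P.l + ((i-1 : ℕ) : ℤ)) := by
  simp only [Quartile.tile, Tile.freq, DD]

lemma tile_I (P : Quartile) (i : ℕ) : (P.tile i).I = P.I := rfl

lemma Q_I (P : Quartile) : P.I = DD (-P.k) P.n := rfl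

lemma len_eq (P : Quartile) : P.len = (2:ℝ)^(-P.k) := rfl

lemma len_pos (P : Quartile) : 0 < P.len := two_zpos _

lemma le_freq {p q : Tile} (h : Tile.le p q) : q.freq ⊆ p.freq := by
  rcases h with h | h
  · exact h.2
  · rw [h]

lemma le_I {p q : Tile} (h : Tile.le p q) : p.I ⊆ q.I := by
  rcases h with h | h
  · exact h.1.subset
  · rw [h]

/-- from a tree relation, the top's scale is at most the member's scale -/
lemma top_k_le {P u : Quartile} {i : ℕ} (h : Tile.le (P.tile i) (u.tile i)) : u.k ≤ P.k := by
  have := le_freq h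
  rw [tile_freq, tile_freq] at this
  exact DD_scale_le this

lemma member_I_subset {P u : Quartile} {i : ℕ} (h : Tile.le (P.tile i) (u.tile i)) :
    P.I ⊆ u.I := le_I h

lemma member_freq_subset {P u : Quartile} {i : ℕ} (h : Tile.le (P.tile i) (u.tile i)) :
    (u.tile i).freq ⊆ (P.tile i).freq := le_freq h

lemma int_core {F B M d d' : ℤ} (hF4 : 4 ∣ F) (hF : 4 ≤ F) (hM : 4 ∣ (M - d))
    (hd : 0 ≤ d) (hd2 : d ≤ 2) (hd' : 0 ≤ d') (hd'2 : d' ≤ 2)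
    (h1 : F * B ≤ M) (h2 : M + 1 ≤ F * (B + 1)) :
    F * B ≤ M - d + d' ∧ (M - d + d') + 1 ≤ F * (B + 1) := by
  have hH : F * (B + 1) = F * B + F := by ring
  have hG4 : 4 ∣ F * B := Dvd.dvd.mul_right hF4 B
  omega

/-- KEY combinatorial lemma: if the `j`-tiles of `P'` (coarse time, fine freq)
and `P` (fine time, coarse freq) overlap in frequency, then each quarter `i'` of `ω_{P'}`
is contained in some quarter `i''` of `ω_P`, with control on `i''` relative to `i'`. -/
lemma C1 {j i' : ℕ} (hj : j = 1 ∨ j = 2 ∨ j = 3) (hi' : i' = 1 ∨ i' = 2 ∨ i' = 3)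
    {P P' : Quartile} (hk : P'.k < P.k)
    {x : ℝ} (hx : x ∈ (P.tile j).freq) (hx' : x ∈ (P'.tile j).freq) :
    ∃ i'', (i'' = 1 ∨ i'' = 2 ∨ i'' = 3) ∧ (P'.tile i').freq ⊆ (P.tile i'').freq ∧
      (i' < j → i' < i'') ∧ (j < i' → i'' < i') := by
  rw [tile_freq] at hx hx'
  set e : ℕ := (P.k - P'.k).toNat with he
  have hke : P.k = P'.k + (e:ℤ) := by
    rw [he, Int.toNat_of_nonneg (by omega)]; ring
  have he1 : 1 ≤ e := by omega
  rw [hke] at hx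
  have hext := DD_extract hx' hx
  rcases Nat.lt_or_ge e 2 with he2 | he2
  · -- e = 1
    have hee : e = 1 := by omega
    rw [hee] at hext
    have hj1 : j = 1 ∧ P'.l = 2 * P.l := by
      rcases hj with h | h | h <;> rw [h] at hext <;> simp at hext <;> omega
    obtain ⟨hj1, hl⟩ := hj1
    subst hj1
    rcases hi' with h | h | h <;> subst h
    · refine ⟨1, Or.inl rfl, ?_, by omega, by omega⟩
      rw [tile_freq, tile_freq, hke, hee]
      exact DD_build (by simp; omega) (by simp; omega)
    · refine ⟨1, Or.inl rfl, ?_, by omega, by omega⟩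
      rw [tile_freq, tile_freq, hke, hee]
      exact DD_build (by simp; omega) (by simp; omega)
    · refine ⟨2, Or.inr (Or.inl rfl), ?_, by omega, by omega⟩
      rw [tile_freq, tile_freq, hke, hee]
      exact DD_build (by simp; omega) (by simp; omega)
  · -- e ≥ 2 : the whole of ω_{P'} is inside quarter j of ω_P
    refine ⟨j, hj, ?_, by omega, by omega⟩
    rw [tile_freq, tile_freq, hke]
    have hF4 : (4:ℤ) ∣ 2^e := by
      refine ⟨2^(e-2), ?_⟩
      rw [show (4:ℤ) = 2^2 by norm_num, ← pow_add]
      congr 1; omega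
    have hF : (4:ℤ) ≤ 2^e := by
      calc (4:ℤ) = 2^2 := by norm_num
      _ ≤ 2^e := pow_le_pow_right₀ (by norm_num) he2
    have hj3 : j ≤ 3 ∧ 1 ≤ j := by rcases hj with h|h|h <;> omega
    have hi'3 : i' ≤ 3 ∧ 1 ≤ i' := by rcases hi' with h|h|h <;> omega
    have hdj : (0:ℤ) ≤ ((j-1:ℕ):ℤ) ∧ ((j-1:ℕ):ℤ) ≤ 2 := by
      constructor <;> [positivity; (push_cast; omega)]
    have hdi : (0:ℤ) ≤ ((i'-1:ℕ):ℤ) ∧ ((i'-1:ℕ):ℤ) ≤ 2 := by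
      constructor <;> [positivity; (push_cast; omega)]
    have hcore := int_core (B := 4*P.l + ((j-1:ℕ):ℤ)) (M := 4*P'.l + ((j-1:ℕ):ℤ))
      hF4 hF ⟨P'.l, by ring⟩ hdj.1 hdj.2 hdi.1 hdi.2 hext.1 hext.2
    exact DD_build (by omega) (by omega)

end SizeDecAux
namespace SizeDecAux

/-- if two `j`-tiles of distinct quartiles overlap, scales differ -/
lemma same_scale_eq {j : ℕ} {P P' : Quartile} (hk : P.k = P'.k)
    {x y : ℝ} (hx : x ∈ (P.tile j).freq) (hx' : x ∈ (P'.tile j).freq)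
    (hy : y ∈ P.I) (hy' : y ∈ P'.I) : P = P' := by
  rw [tile_freq] at hx hx'
  rw [Q_I] at hy hy'
  rw [hk] at hx hy
  have h1 := DD_same_scale hx hx'
  have h2 := DD_same_scale hy hy'
  have h3 : P.l = P'.l := by omega
  cases P; cases P'
  simp_all

/-- CORE1 : the fine-time quartile `P` is in the shadow of the tile `u'.tile i'`,
where `u'` is a tree top over the coarse-time quartile `P'`. -/
lemma CORE1 {j i' : ℕ} (hj : j = 1 ∨ j = 2 ∨ j = 3) (hi' : i' = 1 ∨ i' = 2 ∨ i' = 3)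
    {P P' u' : Quartile} (hk : P'.k < P.k)
    (hPB : Tile.le (P'.tile i') (u'.tile i'))
    {x : ℝ} (hxj : x ∈ (P.tile j).freq) (hxj' : x ∈ (P'.tile j).freq)
    {y : ℝ} (hy : y ∈ P.I) (hy' : y ∈ P'.I) :
    ∃ i'', (i'' = 1 ∨ i'' = 2 ∨ i'' = 3) ∧ Tile.lt (P.tile i'') (u'.tile i') := by
  obtain ⟨i'', hi''m, hsub, -, -⟩ := C1 hj hi' hk hxj hxj'
  refine ⟨i'', hi''m, ?_, fun z hz => hsub (member_freq_subset hPB hz)⟩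
  -- time: P.I ⊊ u'.I
  have hIP : P.I ⊆ P'.I := by
    rw [Q_I] at *
    exact DD_nested (by omega) hy hy'
  have hI2 : P'.I ⊆ u'.I := member_I_subset hPB
  have hku : u'.k ≤ P'.k := top_k_le hPB
  rw [tile_I, show (u'.tile i').I = u'.I from rfl]
  rw [Q_I, Q_I] at *
  exact DD_ssubset (fun z hz => hI2 (hIP hz)) (by omega)

/-- CORE2 : frequency comparison of tree tops over the fine / coarse quartiles. -/
lemma CORE2 {j i : ℕ} (hj : j = 1 ∨ j = 2 ∨ j = 3) (hi : i = 1 ∨ i = 2 ∨ i = 3)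
    (hij : i ≠ j) {P P' uA uB : Quartile} (hk : P'.k < P.k)
    (hPA : Tile.le (P.tile i) (uA.tile i)) (hPB : Tile.le (P'.tile i) (uB.tile i))
    {x : ℝ} (hxj : x ∈ (P.tile j).freq) (hxj' : x ∈ (P'.tile j).freq)
    {ya yb : ℝ} (hya : ya ∈ (uA.tile i).freq) (hyb : yb ∈ (uB.tile i).freq) :
    (i < j → ya < yb) ∧ (j < i → yb < ya) := by
  obtain ⟨i'', hi''m, hsub, hs1, hs2⟩ := C1 hj hi hk hxj hxj'
  have hya' : ya ∈ (P.tile i).freq := member_freq_subset hPA hya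
  have hyb' : yb ∈ (P.tile i'').freq := hsub (member_freq_subset hPB hyb)
  rw [tile_freq] at hya' hyb'
  have hi1 : 1 ≤ i := by rcases hi with h|h|h <;> omega
  have hi''1 : 1 ≤ i'' := by rcases hi''m with h|h|h <;> omega
  constructor
  · intro h
    have : i < i'' := hs1 h
    exact DD_order (by push_cast; omega) hya' hyb'
  · intro h
    have : i'' < i := hs2 h
    exact DD_order (by push_cast; omega) hyb' hya'

/-- disjointness of tile areas via disjoint frequencies or times -/
lemma area_disjoint_of_freq {p q : Tile} (h : Disjoint p.freq q.freq) :
    Disjoint p.area q.area := by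
  rw [Set.disjoint_left]
  rintro ⟨z1, z2⟩ hz hz'
  exact (Set.disjoint_left.1 h) hz.2 hz'.2

lemma not_disjoint_area {p q : Tile} (h : ¬ Disjoint p.area q.area) :
    (∃ y, y ∈ p.I ∧ y ∈ q.I) ∧ (∃ x, x ∈ p.freq ∧ x ∈ q.freq) := by
  rw [Set.not_disjoint_iff] at h
  obtain ⟨⟨z1, z2⟩, hz, hz'⟩ := h
  exact ⟨⟨z1, hz.1, hz'.1⟩, ⟨z2, hz.2, hz'.2⟩⟩

end SizeDecAux
namespace SizeDecAux

noncomputable def leftF (t : Tile) : ℝ := (2:ℝ)^t.k * t.l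

lemma leftF_mem (t : Tile) : leftF t ∈ t.freq := by
  exact ⟨le_refl _, DD_lt t.k t.l⟩

/-- a heavy candidate: an `i`-tree inside `S` whose mass exceeds `δ² |I_top|` -/
def heavy (j : ℕ) (a : Quartile → ℂ) (δ : ℝ) (S : Finset Quartile)
    (i : ℕ) (u : Quartile) (T : Finset Quartile) : Prop :=
  T ⊆ S ∧ (i = 1 ∨ i = 2 ∨ i = 3) ∧ i ≠ j ∧ IsTree i u T ∧
    δ^2 * u.len < ∑ P ∈ T, ‖a P‖^2

def shadowPred (σ : Tile) (P : Quartile) : Prop :=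
  ∃ i'', (i'' = 1 ∨ i'' = 2 ∨ i'' = 3) ∧ Tile.le (P.tile i'') σ

lemma one_le_tpow (n : ℕ) : (1:ℤ) ≤ 2^n := by
  have := pow_pos (show (0:ℤ) < 2 by norm_num) n
  omega

lemma sq_term_nonneg (a : Quartile → ℂ) (P : Quartile) : (0:ℝ) ≤ ‖a P‖^2 := by positivity

lemma heavy_T_nonempty {j : ℕ} {a : Quartile → ℂ} {δ : ℝ} {S : Finset Quartile}
    {i : ℕ} {u : Quartile} {T : Finset Quartile}
    (hδ : 0 < δ) (h : heavy j a δ S i u T) : T.Nonempty := by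
  rcases Finset.eq_empty_or_nonempty T with h' | h'
  · exfalso
    have h5 := h.2.2.2.2
    rw [h'] at h5
    simp at h5
    nlinarith [len_pos u]
  · exact h'

/-- box lemma for the coarse side: `c ≥ 1`, `c·x ≤ b`, `b+1 ≤ c·(x+1)` -/
lemma box_coarse {c x b : ℤ} (hc : 1 ≤ c) (h1 : c * x ≤ b) (h2 : b + 1 ≤ c * (x + 1)) :
    -(|b| + 1) ≤ x ∧ x ≤ |b| := by
  constructor
  · rcases le_or_gt 0 (x+1) with h | h
    · have : 0 ≤ |b| := abs_nonneg b
      omega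
    · have h3 : c * (x+1) ≤ (x+1) := by nlinarith
      have : -|b| ≤ b := neg_abs_le b
      omega
  · rcases le_or_gt 0 x with h | h
    · have h3 : x ≤ c * x := by nlinarith
      have : b ≤ |b| := le_abs_self b
      omega
    · have : 0 ≤ |b| := abs_nonneg b
      omega

/-- box lemma for the fine side: `1 ≤ c ≤ C`, `c·b ≤ m`, `m+1 ≤ c·(b+1)` -/
lemma box_fine {c C b m : ℤ} (hc : 1 ≤ c) (hcC : c ≤ C)
    (h1 : c * b ≤ m) (h2 : m + 1 ≤ c * (b + 1)) :
    -(C * (|b| + 1)) ≤ m ∧ m ≤ C * (|b| + 1) := by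
  have hb1 : -|b| ≤ b := neg_abs_le b
  have hb2 : b ≤ |b| := le_abs_self b
  have hC : 1 ≤ C := le_trans hc hcC
  constructor
  · have e1 : -(c * (|b| + 1)) ≤ c * b := by nlinarith
    have e2 : c * (|b| + 1) ≤ C * (|b|+1) := by nlinarith
    omega
  · have e1 : c * (b+1) ≤ c * (|b| + 1) := by nlinarith
    have e2 : c * (|b| + 1) ≤ C * (|b|+1) := by nlinarith
    omega

/-- the set of tops of heavy candidates of class `i` is finite -/
lemma tops_finite (j : ℕ) (a : Quartile → ℂ) (δ : ℝ) (hδ : 0 < δ)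
    (S : Finset Quartile) (i : ℕ) (hi : i = 1 ∨ i = 2 ∨ i = 3) :
    {u : Quartile | ∃ T, heavy j a δ S i u T}.Finite := by
  classical
  set M : ℝ := ∑ P ∈ S, ‖a P‖^2 with hM
  obtain ⟨N, hN⟩ := exists_nat_gt (M / δ^2)
  set κ : ℤ := -(N:ℤ) with hκ
  have huk_lb : ∀ u T, heavy j a δ S i u T → κ ≤ u.k := by
    intro u T h
    have hlen : δ^2 * u.len < M := by
      refine lt_of_lt_of_le h.2.2.2.2 ?_
      exact Finset.sum_le_sum_of_subset_of_nonneg h.1 (fun P _ _ => sq_term_nonneg a P)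
    have h2 : u.len < M / δ^2 := by
      rw [lt_div_iff₀ (by positivity)]
      linarith [hlen]
    have h3 : (2:ℝ)^(-u.k) < (2:ℝ)^((N:ℤ)) := by
      refine lt_trans (lt_trans h2 hN) ?_
      calc ((N:ℝ)) < 2^N := by exact_mod_cast Nat.lt_two_pow_self (n := N)
      _ = (2:ℝ)^((N:ℤ)) := by rw [← zpow_natCast]
    have h4 := (zpow_lt_zpow_iff_right₀ (by norm_num : (1:ℝ) < 2)).1 h3
    omega
  -- bounding box
  have hBl : True := trivial
  apply Set.Finite.subset
    (Finset.finite_toSet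
      (S.biUnion (fun P₀ => (Finset.Icc κ P₀.k).biUnion (fun m =>
        ((Finset.Icc (-(|P₀.n|+1)) (|P₀.n|+1)) ×ˢ
          (Finset.Icc (-((2:ℤ)^((P₀.k - κ).toNat) * (|4*P₀.l + ((i-1:ℕ):ℤ)| + 1) + 3))
            ((2:ℤ)^((P₀.k - κ).toNat) * (|4*P₀.l + ((i-1:ℕ):ℤ)| + 1) + 3))).image
          (fun q => (⟨m, q.1, q.2⟩ : Quartile))))))
  intro u hu
  obtain ⟨T, hT⟩ := hu
  obtain ⟨P₀, hP₀⟩ := heavy_T_nonempty hδ hT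
  have htree := hT.2.2.2.1 P₀ hP₀
  have hk1 : κ ≤ u.k := huk_lb u T hT
  have hk2 : u.k ≤ P₀.k := top_k_le htree
  -- time bounds
  have hIsub : P₀.I ⊆ u.I := member_I_subset htree
  have hIext : 2^((P₀.k - u.k).toNat) * u.n ≤ P₀.n ∧
      P₀.n + 1 ≤ 2^((P₀.k - u.k).toNat) * (u.n + 1) := by
    have hx : ((2:ℝ)^(-P₀.k) * P₀.n) ∈ DD (-P₀.k) P₀.n := left_mem_DD _ _
    have hx' : ((2:ℝ)^(-P₀.k) * P₀.n) ∈ DD (-u.k) u.n := by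
      have := hIsub hx
      rwa [Q_I] at this
    have he : -u.k = -P₀.k + (((P₀.k - u.k).toNat : ℕ) : ℤ) := by
      rw [Int.toNat_of_nonneg (by omega)]; ring
    rw [he] at hx'
    exact DD_extract hx hx'
  have hnbox := box_coarse (c := 2^((P₀.k - u.k).toNat))
    (one_le_tpow _) hIext.1 hIext.2
  -- frequency bounds
  have hFsub : (u.tile i).freq ⊆ (P₀.tile i).freq := member_freq_subset htree
  have hFext : 2^((P₀.k - u.k).toNat) * (4*P₀.l + ((i-1:ℕ):ℤ)) ≤ 4*u.l + ((i-1:ℕ):ℤ) ∧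
      4*u.l + ((i-1:ℕ):ℤ) + 1 ≤ 2^((P₀.k - u.k).toNat) * (4*P₀.l + ((i-1:ℕ):ℤ) + 1) := by
    have hx : ((2:ℝ)^(u.k) * ((4*u.l + ((i-1:ℕ):ℤ) : ℤ):ℝ)) ∈
        DD u.k (4*u.l + ((i-1:ℕ):ℤ)) := left_mem_DD _ _
    have hx' : ((2:ℝ)^(u.k) * ((4*u.l + ((i-1:ℕ):ℤ) : ℤ):ℝ)) ∈
        DD P₀.k (4*P₀.l + ((i-1:ℕ):ℤ)) := by
      have h1 : ((2:ℝ)^(u.k) * ((4*u.l + ((i-1:ℕ):ℤ) : ℤ):ℝ)) ∈ (u.tile i).freq := by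
        rw [tile_freq]; exact hx
      have := hFsub h1
      rwa [tile_freq] at this
    have he : P₀.k = u.k + (((P₀.k - u.k).toNat : ℕ) : ℤ) := by
      rw [Int.toNat_of_nonneg (by omega)]; ring
    rw [he] at hx'
    exact DD_extract hx hx'
  have hcC : (2:ℤ)^((P₀.k - u.k).toNat) ≤ 2^((P₀.k - κ).toNat) := by
    apply pow_le_pow_right₀ (by norm_num)
    omega
  have hlbox := box_fine (one_le_tpow _) hcC hFext.1 hFext.2
  -- assemble membership
  simp only [Finset.coe_biUnion, Set.mem_iUnion, Finset.mem_coe, Finset.mem_biUnion,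
    Finset.mem_image, Finset.mem_product, Finset.mem_Icc]
  have hc2 : ((i-1:ℕ):ℤ) ≤ 2 := by
    rcases hi with h|h|h <;> subst h <;> norm_num
  have hr : (0:ℤ) ≤ (2:ℤ)^((P₀.k - κ).toNat) * (|4*P₀.l + ((i-1:ℕ):ℤ)| + 1) := by positivity
  refine ⟨P₀, hT.1 hP₀, u.k, ⟨hk1, hk2⟩, ⟨u.n, u.l⟩, ⟨⟨?_, ?_⟩, ⟨?_, ?_⟩⟩, ?_⟩
  · have := hnbox.1; omega
  · have := hnbox.2; omega
  · have := hlbox.1; omega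
  · have := hlbox.2; omega
  · cases u
    rfl

end SizeDecAux
namespace SizeDecAux

/-- selection of an extremal heavy candidate within a class -/
lemma exists_extremal (j : ℕ) (a : Quartile → ℂ) (δ : ℝ) (hδ : 0 < δ)
    (S : Finset Quartile) (i : ℕ) (hi : i = 1 ∨ i = 2 ∨ i = 3)
    (hne : ∃ u T, heavy j a δ S i u T) :
    ∃ u T, heavy j a δ S i u T ∧
      ∀ u' T', heavy j a δ S i u' T' →
        ((i < j → leftF (u'.tile i) ≤ leftF (u.tile i)) ∧
         (j < i → leftF (u.tile i) ≤ leftF (u'.tile i))) := by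
  classical
  have hfin := tops_finite j a δ hδ S i hi
  set U : Finset Quartile := hfin.toFinset with hU
  have hUne : U.Nonempty := by
    obtain ⟨u, T, h⟩ := hne
    exact ⟨u, by simp [hU, Set.Finite.mem_toFinset]; exact ⟨T, h⟩⟩
  obtain ⟨u₀, T₀, h₀⟩ := hne
  rcases Nat.lt_or_ge i j with hij | hij
  · -- class below j : maximize
    obtain ⟨u, hu, hmax⟩ := U.exists_max_image (fun v => leftF (v.tile i)) hUne
    rw [hU, Set.Finite.mem_toFinset] at hu
    obtain ⟨T, hT⟩ := hu
    refine ⟨u, T, hT, fun u' T' h' => ⟨fun _ => ?_, fun h2 => absurd h2 (by omega)⟩⟩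
    exact hmax u' (by rw [hU, Set.Finite.mem_toFinset]; exact ⟨T', h'⟩)
  · -- class above j : minimize
    obtain ⟨u, hu, hmin⟩ := U.exists_min_image (fun v => leftF (v.tile i)) hUne
    rw [hU, Set.Finite.mem_toFinset] at hu
    obtain ⟨T, hT⟩ := hu
    have hij' : j < i := by
      rcases h₀.2.2.1 with h
      omega
    refine ⟨u, T, hT, fun u' T' h' => ⟨fun h2 => absurd h2 (by omega), fun _ => ?_⟩⟩
    exact hmin u' (by rw [hU, Set.Finite.mem_toFinset]; exact ⟨T', h'⟩)

structure Sel where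
  i : ℕ
  u : Quartile
  T : Finset Quartile
  R : Finset Quartile
deriving DecidableEq

noncomputable def xi (A : Sel) : ℝ := leftF (A.u.tile A.i)

def selOk (j : ℕ) (a : Quartile → ℂ) (δ : ℝ) (S : Finset Quartile) (A : Sel) : Prop :=
  (A.i = 1 ∨ A.i = 2 ∨ A.i = 3) ∧ A.i ≠ j ∧ IsTree A.i A.u A.T ∧ A.T ⊆ A.R ∧
    δ^2 * A.u.len < ∑ P ∈ A.T, ‖a P‖^2 ∧ A.R ⊆ S ∧
    ∀ P ∈ A.R, shadowPred (A.u.tile A.i) P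

def relc (j : ℕ) (A B : Sel) : Prop :=
  (∀ P ∈ B.R, ¬ shadowPred (A.u.tile A.i) P) ∧
  (A.i = B.i → (A.i < j → xi B ≤ xi A) ∧ (j < A.i → xi A ≤ xi B))

/-- the greedy tree-selection algorithm -/
lemma grind (j : ℕ) (a : Quartile → ℂ) (δ : ℝ) (hδ : 0 < δ) :
    ∀ N (S : Finset Quartile), S.card ≤ N →
    ∃ (L : List Sel) (Rem : Finset Quartile),
      Rem ⊆ S ∧
      (∀ i u T, ¬ heavy j a δ Rem i u T) ∧
      (∀ A ∈ L, selOk j a δ S A) ∧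
      (∀ P ∈ S, P ∈ Rem ∨ ∃ A ∈ L, P ∈ A.R) ∧
      (∀ P ∈ Rem, ∀ A ∈ L, ¬ shadowPred (A.u.tile A.i) P) ∧
      L.Pairwise (relc j) := by
  classical
  intro N
  induction N with
  | zero =>
    intro S hS
    have hSe : S = ∅ := Finset.card_eq_zero.1 (by omega)
    refine ⟨[], S, le_refl _, ?_, by simp, by simp [hSe], by simp, by simp⟩
    intro i u T h
    have hT : T = ∅ := Finset.subset_empty.1 (by rw [← hSe]; exact h.1)
    have h5 := h.2.2.2.2
    rw [hT] at h5
    simp at h5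
    nlinarith [len_pos u]
  | succ n ih =>
    intro S hS
    by_cases hex : ∃ i u T, heavy j a δ S i u T
    · obtain ⟨i₀, u₀, T₀, h₀⟩ := hex
      have hi₀ := h₀.2.1
      obtain ⟨u, T, hT, hextreme⟩ :=
        exists_extremal j a δ hδ S i₀ hi₀ ⟨u₀, T₀, h₀⟩
      set σ : Tile := u.tile i₀ with hσ
      set R : Finset Quartile := S.filter (fun P => shadowPred σ P) with hR
      set S' : Finset Quartile := S \ R with hS'
      have hTR : T ⊆ R := by
        intro P hP
        rw [hR, Finset.mem_filter]
        exact ⟨hT.1 hP, ⟨i₀, hi₀, hT.2.2.2.1 P hP⟩⟩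
      obtain ⟨P₀, hP₀⟩ := heavy_T_nonempty hδ hT
      have hcard : S'.card ≤ n := by
        have hssub : S' ⊂ S := by
          rw [hS']
          refine Finset.sdiff_ssubset ?_ ?_
          · exact Finset.filter_subset _ _
          · exact ⟨P₀, hTR hP₀⟩
        have := Finset.card_lt_card hssub
        omega
      obtain ⟨L', Rem, hRem, hnoheavy, hok, hcover, hRemShadow, hpw⟩ := ih S' hcard
      refine ⟨⟨i₀, u, T, R⟩ :: L', Rem, ?_, hnoheavy, ?_, ?_, ?_, ?_⟩
      · exact hRem.trans (Finset.sdiff_subset)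
      · -- selOk for head and tail
        intro A hA
        rcases List.mem_cons.1 hA with h | h
        · subst h
          refine ⟨hi₀, hT.2.2.1, hT.2.2.2.1, hTR, hT.2.2.2.2, Finset.filter_subset _ _, ?_⟩
          intro P hP
          exact (Finset.mem_filter.1 hP).2
        · have := hok A h
          exact ⟨this.1, this.2.1, this.2.2.1, this.2.2.2.1, this.2.2.2.2.1,
            this.2.2.2.2.2.1.trans (Finset.sdiff_subset), this.2.2.2.2.2.2⟩
      · -- cover
        intro P hP
        by_cases hPR : P ∈ R
        · exact Or.inr ⟨⟨i₀, u, T, R⟩, List.mem_cons_self, hPR⟩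
        · have hPS' : P ∈ S' := by rw [hS', Finset.mem_sdiff]; exact ⟨hP, hPR⟩
          rcases hcover P hPS' with h | ⟨A, hA, hPA⟩
          · exact Or.inl h
          · exact Or.inr ⟨A, List.mem_cons_of_mem _ hA, hPA⟩
      · -- Rem avoids all shadows
        intro P hP A hA
        rcases List.mem_cons.1 hA with h | h
        · subst h
          intro hsh
          have hPS : P ∈ S' := hRem hP
          rw [hS', Finset.mem_sdiff, hR, Finset.mem_filter] at hPS
          exact hPS.2 ⟨hPS.1, hsh⟩
        · exact hRemShadow P hP A h
      · -- pairwise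
        refine List.Pairwise.cons ?_ hpw
        intro B hB
        constructor
        · intro P hP hsh
          have hPS' : P ∈ S' := (hok B hB).2.2.2.2.2.1 hP
          rw [hS', Finset.mem_sdiff, hR, Finset.mem_filter] at hPS'
          exact hPS'.2 ⟨hPS'.1, hsh⟩
        · intro hiB
          have hokB := hok B hB
          have hheavyB : heavy j a δ S B.i B.u B.T := by
            refine ⟨(hokB.2.2.2.1.trans hokB.2.2.2.2.2.1).trans Finset.sdiff_subset,
              hokB.1, hokB.2.1, hokB.2.2.1, hokB.2.2.2.2.1⟩
          rw [← hiB] at hheavyB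
          have := hextreme B.u B.T hheavyB
          simp only [xi, hiB]
          constructor
          · intro hlt
            rw [← hiB]
            exact this.1 hlt
          · intro hlt
            rw [← hiB]
            exact this.2 hlt
    · push_neg at hex
      refine ⟨[], S, le_refl _, ?_, by simp, by simp, by simp, by simp⟩
      intro i u T h
      exact hex i u T h

end SizeDecAux
namespace SizeDecAux

lemma tfreq (t : Tile) : t.freq = DD t.k t.l := rfl

lemma le_k {p q : Tile} (h : Tile.le p q) : q.k ≤ p.k := by
  have h2 := le_freq h
  rw [tfreq, tfreq] at h2
  exact DD_scale_le h2

/-- asymmetric core of the family-disjointness argument -/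
lemma pair_core (j : ℕ) (hj : j = 1 ∨ j = 2 ∨ j = 3)
    {a : Quartile → ℂ} {δ : ℝ} {S : Finset Quartile}
    {A B : Sel} {i : ℕ} (hi : i = 1 ∨ i = 2 ∨ i = 3)
    (hAi : A.i = i) (hBi : B.i = i)
    (hokA : selOk j a δ S A) (hokB : selOk j a δ S B)
    (hAB : relc j A B ∨ relc j B A)
    {P P' : Quartile} (hP : P ∈ A.T) (hP' : P' ∈ B.T) (hk : P'.k < P.k)
    {x : ℝ} (hxj : x ∈ (P.tile j).freq) (hxj' : x ∈ (P'.tile j).freq)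
    {y : ℝ} (hy : y ∈ P.I) (hy' : y ∈ P'.I) : False := by
  have hij : i ≠ j := by rw [← hAi]; exact hokA.2.1
  have htreeA : Tile.le (P.tile i) (A.u.tile i) := by
    rw [← hAi]; exact hokA.2.2.1 P hP
  have htreeB : Tile.le (P'.tile i) (B.u.tile i) := by
    rw [← hBi]; exact hokB.2.2.1 P' hP'
  rcases hAB with hAB | hBA
  · -- A before B : frequency-order contradiction
    have hxiA : xi A ∈ (A.u.tile i).freq := by rw [xi, hAi]; exact leftF_mem _
    have hxiB : xi B ∈ (B.u.tile i).freq := by rw [xi, hBi]; exact leftF_mem _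
    have hcore := CORE2 hj hi hij hk htreeA htreeB hxj hxj' hxiA hxiB
    have hrule := hAB.2 (by rw [hAi, hBi])
    rw [hAi] at hrule
    rcases Nat.lt_or_ge i j with h | h
    · exact absurd (hrule.1 h) (not_le.2 (hcore.1 h))
    · have h' : j < i := by omega
      exact absurd (hrule.2 h') (not_le.2 (hcore.2 h'))
  · -- B before A : shadow contradiction
    obtain ⟨i'', hi''m, hlt⟩ := CORE1 hj hi hk htreeB hxj hxj' hy hy'
    have hsh : shadowPred (B.u.tile B.i) P := by
      rw [hBi]; exact ⟨i'', hi''m, Or.inl hlt⟩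
    exact hBA.1 P (hokA.2.2.2.1 hP) hsh

/-- same-tree disjointness core -/
lemma same_core (j : ℕ) (hj : j = 1 ∨ j = 2 ∨ j = 3)
    {a : Quartile → ℂ} {δ : ℝ} {S : Finset Quartile}
    {A : Sel} {i : ℕ} (hi : i = 1 ∨ i = 2 ∨ i = 3) (hAi : A.i = i)
    (hokA : selOk j a δ S A)
    {P P' : Quartile} (hP : P ∈ A.T) (hP' : P' ∈ A.T) (hk : P'.k < P.k)
    {x : ℝ} (hxj : x ∈ (P.tile j).freq) (hxj' : x ∈ (P'.tile j).freq) : False := by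
  have hij : i ≠ j := by rw [← hAi]; exact hokA.2.1
  have htreeA : Tile.le (P.tile i) (A.u.tile i) := by
    rw [← hAi]; exact hokA.2.2.1 P hP
  have htreeB : Tile.le (P'.tile i) (A.u.tile i) := by
    rw [← hAi]; exact hokA.2.2.1 P' hP'
  have hxiA : xi A ∈ (A.u.tile i).freq := by rw [xi, hAi]; exact leftF_mem _
  have hcore := CORE2 hj hi hij hk htreeA htreeB hxj hxj' hxiA hxiA
  rcases Nat.lt_or_ge i j with h | h
  · exact lt_irrefl _ (hcore.1 h)
  · have h' : j < i := by omega
    exact lt_irrefl _ (hcore.2 h')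

/-- the members of same-class selected trees have pairwise disjoint `j`-tiles -/
lemma family_disjoint (j : ℕ) (hj : j = 1 ∨ j = 2 ∨ j = 3)
    {a : Quartile → ℂ} {δ : ℝ} {S : Finset Quartile}
    {L : List Sel} (hok : ∀ A ∈ L, selOk j a δ S A) (hpw : L.Pairwise (relc j))
    (i : ℕ) (hi : i = 1 ∨ i = 2 ∨ i = 3) :
    ∀ A ∈ L, A.i = i → ∀ B ∈ L, B.i = i →
      ∀ P ∈ A.T, ∀ P' ∈ B.T, P ≠ P' →
        Disjoint (P.tile j).area ((P'.tile j).area) := by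
  intro A hA hAi B hB hBi P hP P' hP' hPP'
  by_contra hcon
  obtain ⟨⟨y, hy, hy'⟩, ⟨x, hx, hx'⟩⟩ := not_disjoint_area hcon
  rw [tile_I] at hy hy'
  have hsym : A = B ∨ (relc j A B ∨ relc j B A) := by
    by_cases hAB : A = B
    · exact Or.inl hAB
    · refine Or.inr ?_
      have hpw' : L.Pairwise (fun X Y => relc j X Y ∨ relc j Y X) :=
        hpw.imp (fun h => Or.inl h)
      have hsymm : Symmetric (fun X Y : Sel => relc j X Y ∨ relc j Y X) :=
        fun X Y h => h.symm
      exact (haveI : Std.Symm (fun X Y : Sel => relc j X Y ∨ relc j Y X) := ⟨fun X Y h => hsymm h⟩; hpw'.forall hA hB hAB)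
  rcases lt_trichotomy P'.k P.k with hk | hk | hk
  · rcases hsym with h | h
    · subst h
      exact same_core j hj hi hAi (hok A hA) hP hP' hk hx hx'
    · exact pair_core j hj hi hAi hBi (hok A hA) (hok B hB) h hP hP' hk hx hx' hy hy'
  · exact hPP' (same_scale_eq (by omega) hx hx' hy hy')
  · rcases hsym with h | h
    · subst h
      exact same_core j hj hi hAi (hok A hA) hP' hP hk hx' hx
    · exact pair_core j hj hi hBi hAi (hok B hB) (hok A hA)
        (by tauto) hP' hP hk hx' hx hy' hy

/-- distinct selections have disjoint removal sets -/
lemma R_disjoint (j : ℕ) {a : Quartile → ℂ} {δ : ℝ} {S : Finset Quartile}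
    {L : List Sel} (hok : ∀ A ∈ L, selOk j a δ S A) (hpw : L.Pairwise (relc j)) :
    ∀ A ∈ L, ∀ B ∈ L, A ≠ B → Disjoint A.R B.R := by
  intro A hA B hB hAB
  have hpw' : L.Pairwise (fun X Y => relc j X Y ∨ relc j Y X) :=
    hpw.imp (fun h => Or.inl h)
  have hsymm : Symmetric (fun X Y : Sel => relc j X Y ∨ relc j Y X) :=
    fun X Y h => h.symm
  have h := (haveI : Std.Symm (fun X Y : Sel => relc j X Y ∨ relc j Y X) := ⟨fun X Y h => hsymm h⟩; hpw'.forall hA hB hAB)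
  rw [Finset.disjoint_left]
  intro P hPA hPB
  have hshA : shadowPred (A.u.tile A.i) P := (hok A hA).2.2.2.2.2.2 P hPA
  have hshB : shadowPred (B.u.tile B.i) P := (hok B hB).2.2.2.2.2.2 P hPB
  rcases h with h | h
  · exact h.1 P hPB hshA
  · exact h.1 P hPA hshB

end SizeDecAux
namespace SizeDecAux

def vtopQ (u : Quartile) (iu : ℕ) : Quartile := ⟨u.k - 2, u.n / 4, 4*u.l + ((iu-1:ℕ):ℤ)⟩

lemma vtop_len (u : Quartile) (iu : ℕ) : (vtopQ u iu).len = 4 * u.len := by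
  rw [len_eq, len_eq, vtopQ]
  rw [show -((⟨u.k - 2, u.n / 4, 4*u.l + ((iu-1:ℕ):ℤ)⟩ : Quartile).k) = -u.k + 2 by
    simp; ring]
  rw [zpow_add₀ (two_ne_zero : (2:ℝ) ≠ 0)]
  norm_num
  ring

lemma vtop_lt {u : Quartile} {iu i'' : ℕ}
    (hiu : iu = 1 ∨ iu = 2 ∨ iu = 3) (hi'' : i'' = 1 ∨ i'' = 2 ∨ i'' = 3)
    {P : Quartile} (h : Tile.le (P.tile i'') (u.tile iu)) :
    Tile.lt (P.tile i'') ((vtopQ u iu).tile i'') := by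
  have hdiv1 : 4 * (u.n / 4) ≤ u.n ∧ u.n + 1 ≤ 4 * (u.n / 4 + 1) := by
    have h1 := Int.emod_nonneg u.n (by norm_num : (4:ℤ) ≠ 0)
    have h2 := Int.emod_lt_of_pos u.n (by norm_num : (0:ℤ) < 4)
    have h3 := Int.mul_ediv_add_emod u.n 4
    omega
  have hPk : u.k ≤ P.k := le_k h
  constructor
  · -- time : P.I ⊂ v.I
    have h1 : P.I ⊆ u.I := le_I h
    have h2 : u.I ⊆ (vtopQ u iu).I := by
      rw [Q_I, Q_I]
      have hb := DD_build (s := -u.k) (e := 2) (m := u.n) (b := u.n / 4)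
        (by norm_num; omega) (by norm_num; omega)
      rwa [show -u.k + ((2:ℕ):ℤ) = -((vtopQ u iu).k) by simp [vtopQ]; ring] at hb
    have hsub : P.I ⊆ (vtopQ u iu).I := h1.trans h2
    rw [tile_I, show ((vtopQ u iu).tile i'').I = (vtopQ u iu).I from rfl]
    rw [Q_I, Q_I] at hsub ⊢
    refine DD_ssubset hsub ?_
    simp only [vtopQ]
    omega
  · -- freq : v's quarter inside u's quarter iu inside P's quarter i''
    have h1 : (u.tile iu).freq ⊆ (P.tile i'').freq := le_freq h
    refine subset_trans ?_ h1
    rw [tile_freq, tile_freq]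
    simp only [vtopQ]
    have hb := DD_build (s := u.k - 2) (e := 2)
      (m := 4*(4*u.l + ((iu-1:ℕ):ℤ)) + ((i''-1:ℕ):ℤ)) (b := 4*u.l + ((iu-1:ℕ):ℤ))
      (by rcases hi'' with h'|h'|h' <;> subst h' <;> norm_num <;> omega)
      (by rcases hi'' with h'|h'|h' <;> subst h' <;> norm_num <;> omega)
    rwa [show u.k - 2 + ((2:ℕ):ℤ) = u.k by push_cast; ring] at hb

lemma sum_union_le {β : Type*} [DecidableEq β] (s t : Finset β) (f : β → ℝ)
    (hf : ∀ b, 0 ≤ f b) : ∑ b ∈ s ∪ t, f b ≤ ∑ b ∈ s, f b + ∑ b ∈ t, f b := by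
  have h := Finset.sum_union_inter (s₁ := s) (s₂ := t) (f := f)
  have h2 : 0 ≤ ∑ b ∈ s ∩ t, f b := Finset.sum_nonneg (fun b _ => hf b)
  linarith

lemma sum_biUnion_le {α β : Type*} [DecidableEq α] [DecidableEq β]
    (s : Finset α) (t : α → Finset β) (f : β → ℝ) (hf : ∀ b, 0 ≤ f b) :
    ∑ b ∈ s.biUnion t, f b ≤ ∑ x ∈ s, ∑ b ∈ t x, f b := by
  classical
  induction s using Finset.induction_on with
  | empty => simp
  | insert x s' hx ih =>
    rw [Finset.biUnion_insert, Finset.sum_insert hx]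
    exact le_trans (sum_union_le _ _ f hf) (by linarith)

lemma sum_triple_le {β : Type*} [DecidableEq β] (x y z : β) (f : β → ℝ)
    (hf : ∀ b, 0 ≤ f b) : ∑ p ∈ ({x, y, z} : Finset β), f p ≤ f x + f y + f z := by
  have h1 : ({x, y, z} : Finset β) = {x} ∪ ({y} ∪ {z}) := by
    rw [Finset.insert_eq, Finset.insert_eq]
  rw [h1]
  refine le_trans (sum_union_le _ _ f hf) ?_
  have h2 := sum_union_le ({y} : Finset β) ({z} : Finset β) f hf
  simp only [Finset.sum_singleton] at h2 ⊢
  linarith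

end SizeDecAux
/-- the size decrement lemma: if `energy_j ≤ E` and
`size_j ≤ 2^{-n} E` on `Ps₀`, we may split `Ps₀ = Ps₁ ∪ Ps₂` with
`size_j(Ps₁) ≤ 2^{-n-1} E` and `Ps₂` a disjoint union of trees `TT`
with `Σ_{T∈TT} |I_T| ≲ 2^{2n}`. -/
theorem size_decrement :
    ∃ C : ℝ, 0 < C ∧ ∀ (Ps₀ : Finset Quartile) (j : ℕ), j ∈ ({1,2,3} : Set ℕ) →
      ∀ (n : ℤ) (E : ℝ), 0 < E → ∀ a : Quartile → ℂ,
      energy Ps₀ j a ≤ E → size Ps₀ j a ≤ (2:ℝ)^(-n) * E →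
      ∃ Ps₁ Ps₂ : Finset Quartile,
        Ps₁ ∪ Ps₂ = Ps₀ ∧ Disjoint Ps₁ Ps₂ ∧
        size Ps₁ j a ≤ (2:ℝ)^(-n-1) * E ∧
        ∃ TT : Finset (Quartile × Finset Quartile),
          (∀ p ∈ TT, ∃ i ∈ ({1,2,3} : Set ℕ), IsTree i p.1 p.2) ∧
          (∀ P : Quartile, P ∈ Ps₂ ↔ ∃ p ∈ TT, P ∈ p.2) ∧
          (∀ p ∈ TT, ∀ q ∈ TT, p ≠ q → Disjoint p.2 q.2) ∧
          ∑ p ∈ TT, p.1.len ≤ C * (2:ℝ)^(2*n) := by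
  classical
  open SizeDecAux in
  refine ⟨144, by norm_num, ?_⟩
  intro Ps₀ j hj n E hE a hener _hsize
  have hj' : j = 1 ∨ j = 2 ∨ j = 3 := by simpa using hj
  set δ : ℝ := (2:ℝ)^(-n-1) * E with hδdef
  have hδ : 0 < δ := by positivity
  obtain ⟨L, Rem, hRemsub, hnoheavy, hok, hcover, hRemShadow, hpw⟩ :=
    grind j a δ hδ Ps₀.card Ps₀ (le_refl _)
  -- the three trees covering each removal set
  set v : Sel → Quartile := fun A => vtopQ A.u A.i with hv
  set F1 : Sel → Finset Quartile :=
    fun A => A.R.filter (fun P => Tile.le (P.tile 1) (A.u.tile A.i)) with hF1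
  set F2 : Sel → Finset Quartile :=
    fun A => (A.R.filter (fun P => Tile.le (P.tile 2) (A.u.tile A.i))) \ F1 A with hF2
  set F3 : Sel → Finset Quartile :=
    fun A => ((A.R.filter (fun P => Tile.le (P.tile 3) (A.u.tile A.i))) \ F1 A) \ F2 A
    with hF3
  set TT : Finset (Quartile × Finset Quartile) :=
    L.toFinset.biUnion (fun A => {(v A, F1 A), (v A, F2 A), (v A, F3 A)}) with hTT
  have hF1sub : ∀ A, F1 A ⊆ A.R := fun A => Finset.filter_subset _ _
  have hF2sub : ∀ A, F2 A ⊆ A.R :=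
    fun A => (Finset.sdiff_subset).trans (Finset.filter_subset _ _)
  have hF3sub : ∀ A, F3 A ⊆ A.R :=
    fun A => ((Finset.sdiff_subset).trans Finset.sdiff_subset).trans
      (Finset.filter_subset _ _)
  -- coverage of each removal set by the three trees
  have hRcover : ∀ A ∈ L, ∀ P ∈ A.R, P ∈ F1 A ∨ P ∈ F2 A ∨ P ∈ F3 A := by
    intro A hA P hP
    obtain ⟨i'', hi''m, hle⟩ := (hok A hA).2.2.2.2.2.2 P hP
    by_cases h1 : P ∈ F1 A
    · exact Or.inl h1
    by_cases h2 : P ∈ F2 A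
    · exact Or.inr (Or.inl h2)
    rcases hi''m with h | h | h
    · exact absurd (Finset.mem_filter.2 ⟨hP, h ▸ hle⟩) h1
    · exact absurd (Finset.mem_sdiff.2 ⟨Finset.mem_filter.2 ⟨hP, h ▸ hle⟩, h1⟩) h2
    · exact Or.inr (Or.inr (Finset.mem_sdiff.2
        ⟨Finset.mem_sdiff.2 ⟨Finset.mem_filter.2 ⟨hP, h ▸ hle⟩, h1⟩, h2⟩))
  -- removal sets of distinct selections are disjoint
  have hRdisj := R_disjoint j hok hpw
  refine ⟨Rem, Ps₀ \ Rem, Finset.union_sdiff_of_subset hRemsub, Finset.disjoint_sdiff,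
    ?_, TT, ?_, ?_, ?_, ?_⟩
  · -- size bound on the remainder
    apply Real.sSup_le
    · rintro x ⟨p, ⟨hsub, i, hi, hij, htree⟩, rfl⟩
      have hi' : i = 1 ∨ i = 2 ∨ i = 3 := by simpa using hi
      have hnh := hnoheavy i p.1 p.2
      rw [heavy] at hnh
      push_neg at hnh
      have hsum : ∑ P ∈ p.2, ‖a P‖^2 ≤ δ^2 * p.1.len := hnh hsub hi' hij htree
      have hlen := len_pos p.1
      have hdiv : (∑ P ∈ p.2, ‖a P‖^2) / p.1.len ≤ δ^2 := by
        rw [div_le_iff₀ hlen]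
        linarith
      calc Real.sqrt ((∑ P ∈ p.2, ‖a P‖^2) / p.1.len) ≤ Real.sqrt (δ^2) :=
            Real.sqrt_le_sqrt hdiv
        _ = δ := Real.sqrt_sq hδ.le
    · exact hδ.le
  · -- every element of TT is a tree
    intro p hp
    rw [hTT, Finset.mem_biUnion] at hp
    obtain ⟨A, hA, hpm⟩ := hp
    rw [List.mem_toFinset] at hA
    have hiA := (hok A hA).1
    simp only [Finset.mem_insert, Finset.mem_singleton] at hpm
    rcases hpm with h | h | h <;> subst h
    · exact ⟨1, by simp, fun P hP => Or.inl
        (vtop_lt hiA (Or.inl rfl) (Finset.mem_filter.1 hP).2)⟩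
    · refine ⟨2, by simp, fun P hP => Or.inl
        (vtop_lt hiA (Or.inr (Or.inl rfl)) ?_)⟩
      exact (Finset.mem_filter.1 ((Finset.mem_sdiff.1 hP).1)).2
    · refine ⟨3, by simp, fun P hP => Or.inl
        (vtop_lt hiA (Or.inr (Or.inr rfl)) ?_)⟩
      exact (Finset.mem_filter.1
        ((Finset.mem_sdiff.1 ((Finset.mem_sdiff.1 hP).1)).1)).2
  · -- Ps₂ is exactly the union of the trees
    intro P
    constructor
    · intro hP
      rw [Finset.mem_sdiff] at hP
      rcases hcover P hP.1 with h | ⟨A, hA, hPA⟩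
      · exact absurd h hP.2
      · rcases hRcover A hA P hPA with h | h | h
        · exact ⟨(v A, F1 A), by
            rw [hTT, Finset.mem_biUnion]
            exact ⟨A, List.mem_toFinset.2 hA, by simp⟩, h⟩
        · exact ⟨(v A, F2 A), by
            rw [hTT, Finset.mem_biUnion]
            exact ⟨A, List.mem_toFinset.2 hA, by simp⟩, h⟩
        · exact ⟨(v A, F3 A), by
            rw [hTT, Finset.mem_biUnion]
            exact ⟨A, List.mem_toFinset.2 hA, by simp⟩, h⟩
    · rintro ⟨p, hp, hPp⟩
      rw [hTT, Finset.mem_biUnion] at hp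
      obtain ⟨A, hA, hpm⟩ := hp
      rw [List.mem_toFinset] at hA
      have hPR : P ∈ A.R := by
        simp only [Finset.mem_insert, Finset.mem_singleton] at hpm
        rcases hpm with h | h | h <;> subst h
        · exact hF1sub A hPp
        · exact hF2sub A hPp
        · exact hF3sub A hPp
      have hPS : P ∈ Ps₀ := (hok A hA).2.2.2.2.2.1 hPR
      rw [Finset.mem_sdiff]
      refine ⟨hPS, fun hPRem => ?_⟩
      exact hRemShadow P hPRem A hA ((hok A hA).2.2.2.2.2.2 P hPR)
  · -- the trees in TT are pairwise disjoint
    intro p hp q hq hpq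
    rw [hTT, Finset.mem_biUnion] at hp hq
    obtain ⟨A, hA, hpm⟩ := hp
    obtain ⟨B, hB, hqm⟩ := hq
    rw [List.mem_toFinset] at hA hB
    by_cases hABeq : A = B
    · subst hABeq
      simp only [Finset.mem_insert, Finset.mem_singleton] at hpm hqm
      have d12 : Disjoint (F1 A) (F2 A) := (Finset.sdiff_disjoint).symm
      have d13 : Disjoint (F1 A) (F3 A) := by
        refine Finset.disjoint_of_subset_right (Finset.sdiff_subset) ?_
        exact (Finset.sdiff_disjoint).symm
      have d23 : Disjoint (F2 A) (F3 A) := (Finset.sdiff_disjoint).symm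
      rcases hpm with h | h | h <;> rcases hqm with h' | h' | h' <;>
        subst h <;> subst h' <;>
        first
          | exact absurd rfl hpq
          | exact d12
          | exact d12.symm
          | exact d13
          | exact d13.symm
          | exact d23
          | exact d23.symm
    · have hdisjR : Disjoint A.R B.R := hRdisj A hA B hB hABeq
      have hpsub : p.2 ⊆ A.R := by
        simp only [Finset.mem_insert, Finset.mem_singleton] at hpm
        rcases hpm with h | h | h <;> subst h
        · exact hF1sub A
        · exact hF2sub A
        · exact hF3sub A
      have hqsub : q.2 ⊆ B.R := by
        simp only [Finset.mem_insert, Finset.mem_singleton] at hqm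
        rcases hqm with h | h | h <;> subst h
        · exact hF1sub B
        · exact hF2sub B
        · exact hF3sub B
      exact hdisjR.mono hpsub hqsub
  · -- length estimate
    -- step 1 : per-class energy bound
    have hTsubPs : ∀ A ∈ L, A.T ⊆ Ps₀ := fun A hA =>
      (hok A hA).2.2.2.1.trans ((hok A hA).2.2.2.2.2.1)
    have hfiber : ∀ i, (i = 1 ∨ i = 2 ∨ i = 3) →
        ∑ A ∈ L.toFinset.filter (fun A => A.i = i), A.u.len ≤ E^2 / δ^2 := by
      intro i hi
      by_cases hij : i = j
      · have hempty : L.toFinset.filter (fun A => A.i = i) = ∅ := by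
          rw [Finset.filter_eq_empty_iff]
          intro A hA
          rw [List.mem_toFinset] at hA
          have := (hok A hA).2.1
          rw [hij]
          exact this
        rw [hempty]
        simp
        positivity
      · -- the union of the class-i trees is admissible for the energy
        set F : Finset Quartile :=
          (L.toFinset.filter (fun A => A.i = i)).biUnion Sel.T with hF
        have hFsub : F ⊆ Ps₀ := by
          intro P hP
          rw [hF, Finset.mem_biUnion] at hP
          obtain ⟨A, hA, hPA⟩ := hP
          rw [Finset.mem_filter, List.mem_toFinset] at hA
          exact hTsubPs A hA.1 hPA
        have hFdisj : ∀ P ∈ F, ∀ P' ∈ F, P ≠ P' →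
            Disjoint (P.tile j).area ((P'.tile j).area) := by
          intro P hP P' hP' hne
          rw [hF, Finset.mem_biUnion] at hP hP'
          obtain ⟨A, hA, hPA⟩ := hP
          obtain ⟨B, hB, hPB⟩ := hP'
          rw [Finset.mem_filter, List.mem_toFinset] at hA hB
          exact family_disjoint j hj' hok hpw i hi A hA.1 hA.2 B hB.1 hB.2
            P hPA P' hPB hne
        have hEsum : ∑ P ∈ F, ‖a P‖^2 ≤ E^2 := by
          have hmem : Real.sqrt (∑ P ∈ F, ‖a P‖^2) ≤ energy Ps₀ j a := by
            apply le_csSup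
            · refine ⟨Real.sqrt (∑ P ∈ Ps₀, ‖a P‖^2), ?_⟩
              rintro x ⟨D, hD, rfl⟩
              exact Real.sqrt_le_sqrt (Finset.sum_le_sum_of_subset_of_nonneg hD.1
                (fun P _ _ => sq_term_nonneg a P))
            · exact ⟨F, ⟨hFsub, hFdisj⟩, rfl⟩
          have hsq : Real.sqrt (∑ P ∈ F, ‖a P‖^2) ≤ E := le_trans hmem hener
          have hnn : (0:ℝ) ≤ ∑ P ∈ F, ‖a P‖^2 :=
            Finset.sum_nonneg (fun P _ => sq_term_nonneg a P)
          calc ∑ P ∈ F, ‖a P‖^2 = (Real.sqrt (∑ P ∈ F, ‖a P‖^2))^2 :=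
                (Real.sq_sqrt hnn).symm
            _ ≤ E^2 := pow_le_pow_left₀ (Real.sqrt_nonneg _) hsq 2
        have hpwdisj : Set.PairwiseDisjoint
            ↑(L.toFinset.filter (fun A => A.i = i)) Sel.T := by
          intro A hA B hB hAB
          rw [Finset.mem_coe, Finset.mem_filter, List.mem_toFinset] at hA hB
          exact (hRdisj A hA.1 B hB.1 hAB).mono
            ((hok A hA.1).2.2.2.1) ((hok B hB.1).2.2.2.1)
        have hsum_eq : ∑ P ∈ F, ‖a P‖^2 =
            ∑ A ∈ L.toFinset.filter (fun A => A.i = i), ∑ P ∈ A.T, ‖a P‖^2 := by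
          rw [hF]
          exact Finset.sum_biUnion hpwdisj
        have hterm : ∀ A ∈ L.toFinset.filter (fun A => A.i = i),
            δ^2 * A.u.len ≤ ∑ P ∈ A.T, ‖a P‖^2 := by
          intro A hA
          rw [Finset.mem_filter, List.mem_toFinset] at hA
          exact le_of_lt (hok A hA.1).2.2.2.2.1
        have hchain : δ^2 * ∑ A ∈ L.toFinset.filter (fun A => A.i = i), A.u.len
            ≤ E^2 := by
          rw [Finset.mul_sum]
          calc ∑ A ∈ L.toFinset.filter (fun A => A.i = i), δ^2 * A.u.len
              ≤ ∑ A ∈ L.toFinset.filter (fun A => A.i = i), ∑ P ∈ A.T, ‖a P‖^2 :=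
                Finset.sum_le_sum hterm
            _ = ∑ P ∈ F, ‖a P‖^2 := hsum_eq.symm
            _ ≤ E^2 := hEsum
        rw [le_div_iff₀ (by positivity : (0:ℝ) < δ^2)]
        linarith
    -- step 2 : total top-length bound
    have hmaps : ∀ A ∈ L.toFinset, A.i ∈ ({1,2,3} : Finset ℕ) := by
      intro A hA
      rw [List.mem_toFinset] at hA
      have := (hok A hA).1
      simp only [Finset.mem_insert, Finset.mem_singleton]
      exact this
    have htot : ∑ A ∈ L.toFinset, A.u.len ≤ 3 * (E^2 / δ^2) := by
      rw [← Finset.sum_fiberwise_of_maps_to hmaps (fun A => A.u.len)]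
      calc ∑ i ∈ ({1,2,3} : Finset ℕ),
            ∑ A ∈ L.toFinset.filter (fun A => A.i = i), A.u.len
          ≤ ∑ _i ∈ ({1,2,3} : Finset ℕ), (E^2 / δ^2) := by
            refine Finset.sum_le_sum ?_
            intro i hi
            refine hfiber i ?_
            simpa using hi
        _ = 3 * (E^2 / δ^2) := by
            rw [Finset.sum_const]
            norm_num
    -- step 3 : from TT to the top lengths
    have hTTsum : ∑ p ∈ TT, p.1.len ≤ 12 * ∑ A ∈ L.toFinset, A.u.len := by
      rw [hTT]
      refine le_trans (sum_biUnion_le _ _ (fun p : Quartile × Finset Quartile => p.1.len)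
        (fun p => (len_pos p.1).le)) ?_
      rw [Finset.mul_sum]
      refine Finset.sum_le_sum ?_
      intro A _
      refine le_trans (sum_triple_le _ _ _ (fun p : Quartile × Finset Quartile => p.1.len)
        (fun p => (len_pos p.1).le)) ?_
      have hlv : (v A).len = 4 * A.u.len := vtop_len A.u A.i
      simp only [hlv]
      linarith
    -- step 4 : numerics
    have hEne : E^2 ≠ 0 := by positivity
    have hδsq : δ^2 = (2:ℝ)^(-2*n-2) * E^2 := by
      rw [hδdef, mul_pow, ← zpow_natCast ((2:ℝ)^(-n-1)), ← zpow_mul]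
      congr 1
      ring
    have hquot : E^2 / δ^2 = (2:ℝ)^(2*n+2) := by
      rw [hδsq]
      rw [div_mul_eq_div_div_swap, div_self hEne]
      rw [one_div, ← zpow_neg]
      congr 1
      ring
    have hfin : (2:ℝ)^(2*n+2) = 4 * (2:ℝ)^(2*n) := by
      rw [zpow_add₀ (two_ne_zero : (2:ℝ) ≠ 0)]
      norm_num
      ring
    calc ∑ p ∈ TT, p.1.len ≤ 12 * ∑ A ∈ L.toFinset, A.u.len := hTTsum
      _ ≤ 12 * (3 * (E^2 / δ^2)) := by linarith
      _ = 36 * ((2:ℝ)^(2*n+2)) := by rw [hquot]; ring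
      _ = 144 * (2:ℝ)^(2*n) := by rw [hfin]; ring
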